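/- arXiv:1909.13614 — 5 statements merged into one kernel-verified Lean document; each statement's English description precedes it below -/
import Mathlib

section
/- Let d, κ be integers with d ≥ 2 or d ≤ -2, and Δ a positive integer. For a fixed integer m with m(d-1)+κ ≠ 0, the congruence m·d^{n₀} + κ·(d^{n₀}-1)/(d-1) ≡ m·d^{n} + κ·(d^{n}-1)/(d-1) (mod Δ) holds for integers n > n₀ ≥ 0 if and only if d^{n-n₀} ≡ 1 (mod |Δ(d-1)| / gcd(Δ(d-1), d^{n₀}(m(d-1)+κ))). -/
/-!
The two sides are the terms x_{n₀}, x_n of the orbit of m under x ↦ d x + κ. Multiplying by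
d - 1 ≠ 0 turns x_n - x_{n₀} into d^{n₀} (m (d - 1) + κ) (d^{n-n₀} - 1), so the congruence
modulo Δ becomes divisibility of that product by Δ (d - 1); dividing Δ (d - 1) by its gcd with
the first factor leaves the stated modulus.
-/

open Finset

theorem Int.dvd_mul_iff_abs_div_gcd_dvd {a b c : ℤ} (h : 0 < Int.gcd a b) :
    a ∣ b * c ↔ |a| / (Int.gcd a b : ℤ) ∣ c := by
  obtain ⟨g, a', b', hg, hcop, rfl, rfl⟩ := Int.exists_gcd_one' h
  have hg' : (g : ℤ) ≠ 0 := by positivity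
  rw [Int.gcd_mul_right, hcop, Int.natAbs_natCast, one_mul, abs_mul, Nat.abs_cast,
    Int.mul_ediv_cancel _ hg', abs_dvd, mul_right_comm, mul_dvd_mul_iff_right hg']
  exact ⟨(Int.isCoprime_iff_gcd_eq_one.mpr hcop).dvd_of_dvd_mul_left,
    fun h ↦ h.mul_left b'⟩

theorem affine_orbit_sub_mul_sub_one {R : Type*} [CommRing R] (d κ m : R) (n₀ k : ℕ) :
    (m * d ^ (n₀ + k) + κ * ∑ i ∈ range (n₀ + k), d ^ i -
        (m * d ^ n₀ + κ * ∑ i ∈ range n₀, d ^ i)) * (d - 1) =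
      d ^ n₀ * (m * (d - 1) + κ) * (d ^ k - 1) := by
  linear_combination κ * geom_sum_mul d (n₀ + k) - κ * geom_sum_mul d n₀ +
    (m * (d - 1) + κ) * pow_add d n₀ k

theorem congruence_iff_pow_modEq_general (d κ m : ℤ) (hd : 2 ≤ |d|) (Δ : ℤ) (hΔ : 0 < Δ)
    (n₀ n : ℕ) (hn : n₀ < n) :
    (m * d ^ n₀ + κ * (∑ i ∈ Finset.range n₀, d ^ i) ≡
      m * d ^ n + κ * (∑ i ∈ Finset.range n, d ^ i) [ZMOD Δ]) ↔
    d ^ (n - n₀) ≡ 1 [ZMOD (|Δ * (d - 1)| /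
      (Int.gcd (Δ * (d - 1)) (d ^ n₀ * (m * (d - 1) + κ)) : ℤ))] := by
  obtain ⟨k, rfl⟩ := Nat.exists_eq_add_of_le hn.le
  have hd1 : d - 1 ≠ 0 := by
    rcases abs_cases d with ⟨h1, h2⟩ | ⟨h1, h2⟩ <;> omega
  have hgcd : 0 < Int.gcd (Δ * (d - 1)) (d ^ n₀ * (m * (d - 1) + κ)) :=
    Int.gcd_pos_of_ne_zero_left _ (mul_ne_zero hΔ.ne' hd1)
  rw [Nat.add_sub_cancel_left, Int.modEq_iff_dvd, Int.modEq_iff_dvd,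
    ← mul_dvd_mul_iff_right hd1, affine_orbit_sub_mul_sub_one,
    Int.dvd_mul_iff_abs_div_gcd_dvd hgcd, dvd_sub_comm]

theorem congruence_iff_pow_modEq (d κ m : ℤ) (hd : 2 ≤ |d|) (Δ : ℤ) (hΔ : 0 < Δ)
    (hm : m * (d - 1) + κ ≠ 0) (n₀ n : ℕ) (hn : n₀ < n) :
    (m * d ^ n₀ + κ * (∑ i ∈ Finset.range n₀, d ^ i) ≡
      m * d ^ n + κ * (∑ i ∈ Finset.range n, d ^ i) [ZMOD Δ]) ↔
    d ^ (n - n₀) ≡ 1 [ZMOD (|Δ * (d - 1)| /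
      (Int.gcd (Δ * (d - 1)) (d ^ n₀ * (m * (d - 1) + κ)) : ℤ))] :=
  congruence_iff_pow_modEq_general d κ m hd Δ hΔ n₀ n hn
end

section
/- Let Δ = Δ₁·Δ₂ with gcd(Δ₁,Δ₂)=1, let φ(x) = dx + κ on ℤ/Δℤ, and let φᵢ(x) = dx + κ on ℤ/Δᵢℤ for i = 1,2 (with d, κ reduced mod Δᵢ). Then n is the least period of some periodic point of φ if and only if n = lcm(n₁, n₂) where nᵢ is the least period of some periodic point of φᵢ. -/
open Function

private lemma equiv_semiconj_minimalPeriod {α β : Type*} (e : α ≃ β) (f : α → α) (g : β → β)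
    (h : ∀ x, e (f x) = g (e x)) (x : α) :
    Function.minimalPeriod g (e x) = Function.minimalPeriod f x := by
  have hsc : Function.Semiconj e f g := h
  have hiter : ∀ n x, g^[n] (e x) = e (f^[n] x) := by
    intro n x
    exact ((hsc.iterate_right n).eq x).symm
  have hpp : ∀ n, IsPeriodicPt g n (e x) ↔ IsPeriodicPt f n x := by
    intro n
    unfold IsPeriodicPt IsFixedPt
    rw [hiter]
    exact ⟨fun hh => e.injective hh, fun hh => by rw [hh]⟩
  apply Nat.dvd_antisymm
  · rw [← isPeriodicPt_iff_minimalPeriod_dvd, hpp]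
    exact isPeriodicPt_minimalPeriod f x
  · rw [← isPeriodicPt_iff_minimalPeriod_dvd, ← hpp]
    exact isPeriodicPt_minimalPeriod g (e x)

private lemma equiv_semiconj_periodicPts {α β : Type*} (e : α ≃ β) (f : α → α) (g : β → β)
    (h : ∀ x, e (f x) = g (e x)) (x : α) :
    e x ∈ Function.periodicPts g ↔ x ∈ Function.periodicPts f := by
  rw [← minimalPeriod_pos_iff_mem_periodicPts, ← minimalPeriod_pos_iff_mem_periodicPts,
    equiv_semiconj_minimalPeriod e f g h]


private lemma mem_periodicPts_prod_map {α β : Type*} (f : α → α) (g : β → β) (x : α × β) :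
    x ∈ Function.periodicPts (Prod.map f g) ↔
      x.1 ∈ Function.periodicPts f ∧ x.2 ∈ Function.periodicPts g := by
  simp only [← Function.minimalPeriod_pos_iff_mem_periodicPts,
    Function.minimalPeriod_prodMap]
  constructor
  · intro h
    constructor
    · by_contra hz
      rw [not_lt, Nat.le_zero] at hz
      rw [hz] at h
      simp at h
    · by_contra hz
      rw [not_lt, Nat.le_zero] at hz
      rw [hz] at h
      simp at h
  · rintro ⟨ha, hb⟩
    exact Nat.lcm_pos ha hb

theorem periods_of_affine_crt (Δ₁ Δ₂ : ℕ) (h₁ : 0 < Δ₁) (h₂ : 0 < Δ₂)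
    (hco : Nat.Coprime Δ₁ Δ₂) (d κ : ℤ)
    (φ : ZMod (Δ₁ * Δ₂) → ZMod (Δ₁ * Δ₂))
    (hφ : ∀ x, φ x = (d : ZMod (Δ₁ * Δ₂)) * x + (κ : ZMod (Δ₁ * Δ₂)))
    (φ₁ : ZMod Δ₁ → ZMod Δ₁) (hφ₁ : ∀ x, φ₁ x = (d : ZMod Δ₁) * x + (κ : ZMod Δ₁))
    (φ₂ : ZMod Δ₂ → ZMod Δ₂) (hφ₂ : ∀ x, φ₂ x = (d : ZMod Δ₂) * x + (κ : ZMod Δ₂))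
    (n : ℕ) :
    (∃ x ∈ Function.periodicPts φ, Function.minimalPeriod φ x = n) ↔
    (∃ n₁ n₂ : ℕ, (∃ x₁ ∈ Function.periodicPts φ₁, Function.minimalPeriod φ₁ x₁ = n₁) ∧
      (∃ x₂ ∈ Function.periodicPts φ₂, Function.minimalPeriod φ₂ x₂ = n₂) ∧
      n = Nat.lcm n₁ n₂) := by
  set E := ZMod.chineseRemainder hco with hE
  set e : ZMod (Δ₁ * Δ₂) ≃ ZMod Δ₁ × ZMod Δ₂ := E.toEquiv with he
  have hsemi : ∀ x, e (φ x) = Prod.map φ₁ φ₂ (e x) := by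
    intro x
    have : E (φ x) = Prod.map φ₁ φ₂ (E x) := by
      rw [hφ, map_add, map_mul, map_intCast, map_intCast]
      obtain ⟨a, b⟩ := E x
      simp [Prod.map, hφ₁, hφ₂, Prod.ext_iff, Prod.mul_def, Prod.add_def]
    exact this
  have hmp : ∀ x, Function.minimalPeriod (Prod.map φ₁ φ₂) (e x) = Function.minimalPeriod φ x :=
    equiv_semiconj_minimalPeriod e φ _ hsemi
  have hpp : ∀ x, e x ∈ Function.periodicPts (Prod.map φ₁ φ₂) ↔ x ∈ Function.periodicPts φ :=
    equiv_semiconj_periodicPts e φ _ hsemi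
  constructor
  · rintro ⟨x, hx, rfl⟩
    refine ⟨Function.minimalPeriod φ₁ (e x).1, Function.minimalPeriod φ₂ (e x).2,
      ⟨(e x).1, ?_, rfl⟩, ⟨(e x).2, ?_, rfl⟩, ?_⟩
    · have := (hpp x).2 hx
      rw [mem_periodicPts_prod_map φ₁ φ₂ _] at this
      exact this.1
    · have := (hpp x).2 hx
      rw [mem_periodicPts_prod_map φ₁ φ₂ _] at this
      exact this.2
    · rw [← hmp x, Function.minimalPeriod_prodMap]
  · rintro ⟨n₁, n₂, ⟨x₁, hx₁, rfl⟩, ⟨x₂, hx₂, rfl⟩, rfl⟩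
    refine ⟨e.symm (x₁, x₂), ?_, ?_⟩
    · rw [← hpp, e.apply_symm_apply, mem_periodicPts_prod_map φ₁ φ₂ _]
      exact ⟨hx₁, hx₂⟩
    · rw [← hmp, e.apply_symm_apply, Function.minimalPeriod_prodMap]
end

section
/- Let F(x) = d₁x + α and G(x) = d₂x + β with d₁, d₂ ∈ ℤ, d₁ ≠ d₂, and suppose κ := β(d₁-1) - α(d₂-1) ∈ ℤ. Then for every x in C = {(m + β - α)/(d₁ - d₂) : m ∈ ℤ} and every integer s ≥ 1, F^s(x) - G^s(x) ∈ ℤ. -/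
/-!
On `D = {y | F y - G y ∈ ℤ}` the identity `F (G y) - G (G y) = d₂ (F y - G y) + κ` shows that `G`
maps `D` into itself, and `C ⊆ D`. Writing
`F^[s+1] x - G^[s+1] x = (F (F^[s] x) - F (G^[s] x)) + (F (G^[s] x) - G (G^[s] x))`, the first
summand is `d₁ (F^[s] x - G^[s] x)` and the second is integral because `G^[s] x ∈ D`, so induction
on `s` applies.
-/

theorem iterate_sub_iterate_mem {R : Type*} [AddCommGroup R] (S : AddSubgroup R) {F G : R → R}
    (hF : ∀ a b, a - b ∈ S → F a - F b ∈ S)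
    (hG : Set.MapsTo G {y | F y - G y ∈ S} {y | F y - G y ∈ S})
    {x : R} (hx : F x - G x ∈ S) (s : ℕ) : F^[s] x - G^[s] x ∈ S := by
  induction s with
  | zero => simp
  | succ s ih =>
    have hGs : F (G^[s] x) - G (G^[s] x) ∈ S := hG.iterate s hx
    rw [Function.iterate_succ_apply', Function.iterate_succ_apply', ← sub_add_sub_cancel _ (F _)]
    exact S.add_mem (hF _ _ ih) hGs

section Affine

variable {d₁ d₂ : ℤ} {α β : ℝ} {F G : ℝ → ℝ}

theorem affine_sub_mem_intCast_range (hF : ∀ x, F x = d₁ * x + α) {a b : ℝ}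
    (hab : a - b ∈ (Int.castAddHom ℝ).range) : F a - F b ∈ (Int.castAddHom ℝ).range := by
  obtain ⟨k, hk⟩ := hab
  refine ⟨d₁ * k, ?_⟩
  simp only [Int.coe_castAddHom, Int.cast_mul] at hk ⊢
  rw [hF, hF, hk]
  ring

theorem affine_sub_comp_eq (hF : ∀ x, F x = d₁ * x + α) (hG : ∀ x, G x = d₂ * x + β) (y : ℝ) :
    F (G y) - G (G y) = d₂ * (F y - G y) + (β * (d₁ - 1) - α * (d₂ - 1)) := by
  simp only [hF, hG]
  ring

theorem mapsTo_affine_sub_mem_intCast_range (κ : ℤ) (hκ : (κ : ℝ) = β * (d₁ - 1) - α * (d₂ - 1))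
    (hF : ∀ x, F x = d₁ * x + α) (hG : ∀ x, G x = d₂ * x + β) :
    Set.MapsTo G {y | F y - G y ∈ (Int.castAddHom ℝ).range}
      {y | F y - G y ∈ (Int.castAddHom ℝ).range} := by
  rintro y ⟨k, hk⟩
  refine ⟨d₂ * k + κ, ?_⟩
  simp only [Int.coe_castAddHom, Int.cast_add, Int.cast_mul] at hk ⊢
  rw [affine_sub_comp_eq hF hG, hk, hκ]

end Affine

theorem iterates_diff_int_on_C (d₁ d₂ : ℤ) (hd : d₁ ≠ d₂) (α β : ℝ)
    (κ : ℤ) (hκ : (κ : ℝ) = β * (d₁ - 1) - α * (d₂ - 1))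
    (F G : ℝ → ℝ) (hF : ∀ x, F x = d₁ * x + α) (hG : ∀ x, G x = d₂ * x + β)
    (x : ℝ) (hx : ∃ m : ℤ, x = (m + β - α) / (d₁ - d₂)) :
    ∀ s : ℕ, 1 ≤ s → ∃ k : ℤ, F^[s] x - G^[s] x = k := by
  obtain ⟨m, hm⟩ := hx
  have hd' : (d₁ : ℝ) - d₂ ≠ 0 := sub_ne_zero.mpr (Int.cast_injective.ne hd)
  have hFG : F x - G x ∈ (Int.castAddHom ℝ).range := ⟨m, by
    rw [Int.coe_castAddHom, hF, hG, hm]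
    field_simp
    ring⟩
  intro s _
  obtain ⟨k, hk⟩ := iterate_sub_iterate_mem _ (fun _ _ ↦ affine_sub_mem_intCast_range hF)
    (mapsTo_affine_sub_mem_intCast_range κ hκ hF hG) hFG s
  exact ⟨k, hk.symm⟩
end

section
/- Let F(x) = d₁x + α and G(x) = d₂x + β with d₁, d₂ ∈ ℤ, d₁ ≠ d₂, d₂ ≠ 1, κ := β(d₁-1) - α(d₂-1) ∈ ℤ. Let x₀ = (m + β - α)/(d₁ - d₂) for m ∈ ℤ, and define the alternating orbit x₁ = F(x₀), x₂ = G(x₁), x₃ = F(x₂), x₄ = G(x₃), .... Then for all n ≥ 0, xₙ - (d₂ⁿ m + κ(1 - d₂ⁿ)/(1 - d₂) + β - α)/(d₁ - d₂) ∈ ℤ. -/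
/-!
In the coordinate `y = (d₁ - d₂) * x - (β - α)` the maps `F` and `G` become `y ↦ d₁ * y + κ`
and `y ↦ d₂ * y + κ`, and `x₀` becomes `m`. Since `d₁ * y ≡ d₂ * y` modulo `d₁ - d₂`, every
orbit mixing the two integer maps stays congruent to the pure orbit of `y ↦ d₂ * y + κ`, which
is `d₂ ^ n * m + κ * (1 + d₂ + ⋯ + d₂ ^ (n - 1))`.
-/

open Finset

def affineOrbit (d κ m : ℤ) (n : ℕ) : ℤ :=
  d ^ n * m + κ * ∑ i ∈ range n, d ^ i

@[simp]
lemma affineOrbit_zero (d κ m : ℤ) : affineOrbit d κ m 0 = m := by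
  simp [affineOrbit]

lemma affineOrbit_succ (d κ m : ℤ) (n : ℕ) :
    affineOrbit d κ m (n + 1) = d * affineOrbit d κ m n + κ := by
  simp only [affineOrbit, geom_sum_succ, pow_succ]
  ring

lemma exists_eq_affineOrbit_add_mul {R : Type*} [CommRing R] (d₁ d₂ κ m : ℤ) (y : ℕ → R)
    (h0 : y 0 = m)
    (hstep : ∀ n, y (n + 1) = d₁ * y n + κ ∨ y (n + 1) = d₂ * y n + κ) (n : ℕ) :
    ∃ k : ℤ, y n = affineOrbit d₂ κ m n + (d₁ - d₂) * k := by
  induction n with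
  | zero => exact ⟨0, by simp [h0]⟩
  | succ n ih =>
    obtain ⟨k, hk⟩ := ih
    rcases hstep n with hy | hy
    · refine ⟨affineOrbit d₂ κ m n + d₁ * k, ?_⟩
      rw [hy, hk, affineOrbit_succ]
      push_cast
      ring
    · refine ⟨d₂ * k, ?_⟩
      rw [hy, hk, affineOrbit_succ]
      push_cast
      ring

theorem alternating_orbit_formula_general (d₁ d₂ : ℤ) (hd : d₁ ≠ d₂) (α β : ℝ)
    (κ : ℤ) (hκ : (κ : ℝ) = β * (d₁ - 1) - α * (d₂ - 1))
    (F G : ℝ → ℝ) (hF : ∀ y, F y = d₁ * y + α) (hG : ∀ y, G y = d₂ * y + β)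
    (m : ℤ) (x : ℕ → ℝ) (hx0 : x 0 = (m + β - α) / (d₁ - d₂))
    (hx : ∀ n : ℕ, x (n + 1) = if Even n then F (x n) else G (x n)) :
    ∀ n : ℕ, ∃ k : ℤ,
      x n - ((d₂ ^ n * m + κ * (∑ i ∈ Finset.range n, d₂ ^ i) + β - α) / (d₁ - d₂)) = k := by
  have hD : (d₁ : ℝ) - d₂ ≠ 0 := sub_ne_zero.mpr (mod_cast hd)
  let y n := (d₁ - d₂) * x n - (β - α)
  have hy0 : y 0 = m := by
    simp only [y, hx0]
    field_simp
    ring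
  have hstep n : y (n + 1) = d₁ * y n + κ ∨ y (n + 1) = d₂ * y n + κ := by
    simp only [y, hx n]
    split_ifs
    · exact .inl (by rw [hF]; linear_combination -hκ)
    · exact .inr (by rw [hG]; linear_combination -hκ)
  intro n
  obtain ⟨k, hk⟩ := exists_eq_affineOrbit_add_mul d₁ d₂ κ m y hy0 hstep n
  refine ⟨k, ?_⟩
  simp only [y, affineOrbit] at hk
  push_cast at hk ⊢
  field_simp
  linear_combination hk

theorem alternating_orbit_formula (d₁ d₂ : ℤ) (hd : d₁ ≠ d₂) (hd₂ : d₂ ≠ 1) (α β : ℝ)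
    (κ : ℤ) (hκ : (κ : ℝ) = β * (d₁ - 1) - α * (d₂ - 1))
    (F G : ℝ → ℝ) (hF : ∀ y, F y = d₁ * y + α) (hG : ∀ y, G y = d₂ * y + β)
    (m : ℤ) (x : ℕ → ℝ) (hx0 : x 0 = (m + β - α) / (d₁ - d₂))
    (hx : ∀ n : ℕ, x (n + 1) = if Even n then F (x n) else G (x n)) :
    ∀ n : ℕ, ∃ k : ℤ,
      x n - ((d₂ ^ n * m + κ * (∑ i ∈ Finset.range n, d₂ ^ i) + β - α) / (d₁ - d₂)) = k :=
  alternating_orbit_formula_general d₁ d₂ hd α β κ hκ F G hF hG m x hx0 hx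
end

section
/- Let d₂ ∈ ℤ with d₂ ∉ {0,1}, d₁ ∈ ℤ with d₁ ≠ d₂, κ ∈ ℤ, and m ∈ ℤ with m(d₂-1)+κ ≠ 0. Then there exists a minimal n₀ ≥ 0 such that m·d₂^{n₀} + κ·(d₂^{n₀}-1)/(d₂-1) ≡ m·d₂^{n} + κ·(d₂^{n}-1)/(d₂-1) (mod |d₁-d₂|) for some n > n₀; moreover, n₀ is the minimal non-negative integer N satisfying gcd(d₂, (d₁-d₂)(d₂-1)/gcd((d₁-d₂)(d₂-1), d₂^N(m(d₂-1)+κ))) = 1. -/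
private lemma natAbs_div_nat (M : ℤ) (g : ℕ) (h : (g:ℤ) ∣ M) :
    (M / (g:ℤ)).natAbs = M.natAbs / g := by
  rcases h with ⟨t, rfl⟩
  rcases Nat.eq_zero_or_pos g with hg | hg
  · simp [hg]
  · rw [Int.mul_ediv_cancel_left _ (by exact_mod_cast hg.ne' : (g:ℤ) ≠ 0),
      Int.natAbs_mul, Int.natAbs_natCast, Nat.mul_div_cancel_left _ hg]

-- the factorization lemma: dropping a factor e coprime to b doesn't change gcd-with-b-ness
private lemma fac_lemma (a e x b : ℕ) (ha : a ≠ 0) (he : e ≠ 0) (hx : x ≠ 0)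
    (hbe : Nat.Coprime b e) :
    (Nat.Coprime b (a * e / Nat.gcd (a * e) x) ↔ Nat.Coprime b (a / Nat.gcd a x)) := by
  have hae : a * e ≠ 0 := Nat.mul_ne_zero ha he
  have h1 : a * e / Nat.gcd (a * e) x ≠ 0 :=
    (Nat.div_pos (Nat.le_of_dvd (Nat.pos_of_ne_zero hae) (Nat.gcd_dvd_left _ _)) (Nat.pos_of_ne_zero (Nat.gcd_ne_zero_left hae))).ne'
  have h2 : a / Nat.gcd a x ≠ 0 :=
    (Nat.div_pos (Nat.le_of_dvd (Nat.pos_of_ne_zero ha) (Nat.gcd_dvd_left _ _)) (Nat.pos_of_ne_zero (Nat.gcd_ne_zero_left ha))).ne'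
  constructor
  · intro h
    by_contra hc
    obtain ⟨p, hp, hpb, hpy⟩ := Nat.Prime.not_coprime_iff_dvd.1 hc
    have hkey : (a * e / Nat.gcd (a * e) x).factorization p = (a / Nat.gcd a x).factorization p := by
      rw [Nat.factorization_div (Nat.gcd_dvd_left (a*e) x), Nat.factorization_div (Nat.gcd_dvd_left a x),
        Nat.factorization_gcd hae hx, Nat.factorization_gcd ha hx]
      have hpe : e.factorization p = 0 :=
        Nat.factorization_eq_zero_of_not_dvd (fun hd => Nat.Prime.not_dvd_one hp (hbe ▸ Nat.dvd_gcd hpb hd))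
      simp [Nat.factorization_mul ha he, hpe]
    have : p ∣ a * e / Nat.gcd (a * e) x := by
      rw [(Nat.Prime.dvd_iff_one_le_factorization hp h1), hkey,
        ← Nat.Prime.dvd_iff_one_le_factorization hp h2]
      exact hpy
    exact Nat.Prime.not_dvd_one hp (h ▸ Nat.dvd_gcd hpb this)
  · intro h
    by_contra hc
    obtain ⟨p, hp, hpb, hpy⟩ := Nat.Prime.not_coprime_iff_dvd.1 hc
    have hkey : (a * e / Nat.gcd (a * e) x).factorization p = (a / Nat.gcd a x).factorization p := by
      rw [Nat.factorization_div (Nat.gcd_dvd_left (a*e) x), Nat.factorization_div (Nat.gcd_dvd_left a x),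
        Nat.factorization_gcd hae hx, Nat.factorization_gcd ha hx]
      have hpe : e.factorization p = 0 :=
        Nat.factorization_eq_zero_of_not_dvd (fun hd => Nat.Prime.not_dvd_one hp (hbe ▸ Nat.dvd_gcd hpb hd))
      simp [Nat.factorization_mul ha he, hpe]
    have : p ∣ a / Nat.gcd a x := by
      rw [(Nat.Prime.dvd_iff_one_le_factorization hp h2), ← hkey,
        ← Nat.Prime.dvd_iff_one_le_factorization hp h1]
      exact hpy
    exact Nat.Prime.not_dvd_one hp (h ▸ Nat.dvd_gcd hpb this)


private lemma nonempty_lemma (a b c : ℕ) (ha : a ≠ 0) (hb : b ≠ 0) (hc : c ≠ 0) :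
    Nat.Coprime b (a / Nat.gcd a (b ^ a * c)) := by
  have hx : b ^ a * c ≠ 0 := Nat.mul_ne_zero (pow_ne_zero _ hb) hc
  by_contra hcon
  obtain ⟨p, hp, hpb, hpy⟩ := Nat.Prime.not_coprime_iff_dvd.1 hcon
  have hy0 : a / Nat.gcd a (b ^ a * c) ≠ 0 :=
    (Nat.div_pos (Nat.le_of_dvd (Nat.pos_of_ne_zero ha) (Nat.gcd_dvd_left _ _))
      (Nat.pos_of_ne_zero (Nat.gcd_ne_zero_left ha))).ne'
  have hfle : a.factorization p ≤ (b ^ a * c).factorization p := by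
    have h1 : 1 ≤ b.factorization p := Nat.Prime.factorization_pos_of_dvd hp hb hpb
    have h2 : a.factorization p < a := Nat.factorization_lt p ha
    calc a.factorization p ≤ a := h2.le
      _ ≤ a * b.factorization p := Nat.le_mul_of_pos_right a h1
      _ ≤ (b ^ a).factorization p := by rw [Nat.factorization_pow]; simp
      _ ≤ (b ^ a * c).factorization p := by
          rw [Nat.factorization_mul (pow_ne_zero _ hb) hc]; simp
  have : (a / Nat.gcd a (b ^ a * c)).factorization p = 0 := by
    rw [Nat.factorization_div (Nat.gcd_dvd_left a _), Nat.factorization_gcd ha hx]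
    simp [Nat.sub_eq_zero_of_le, min_eq_left hfle]
  have := (Nat.Prime.dvd_iff_one_le_factorization hp hy0).1 hpy
  omega

private lemma key_lemma (d₂ M x : ℤ) (hd0 : d₂ ≠ 0) (hd1 : d₂ ≠ 1) (hM : M ≠ 0) (hx : x ≠ 0) :
    (∃ j : ℕ, 0 < j ∧ M ∣ x * ∑ i ∈ Finset.range j, d₂ ^ i) ↔
      Nat.Coprime d₂.natAbs (M.natAbs / Nat.gcd M.natAbs x.natAbs) := by
  set g : ℕ := Int.gcd M x with hgdef
  have hg0 : 0 < g := Int.gcd_pos_of_ne_zero_left _ hM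
  have hgM : (g:ℤ) ∣ M := Int.gcd_dvd_left _ _
  have hgx : (g:ℤ) ∣ x := Int.gcd_dvd_right _ _
  set M' : ℤ := M / g with hM'def
  have hMeq : M = (g:ℤ) * M' := by rw [hM'def, Int.mul_ediv_cancel' hgM]
  have hM'0 : M' ≠ 0 := by
    intro h; rw [h, mul_zero] at hMeq; exact hM hMeq
  have hcop : IsCoprime M' (x / g) := by
    rw [Int.isCoprime_iff_gcd_eq_one]
    exact Int.gcd_div_gcd_div_gcd (by exact_mod_cast hg0)
  have habs : (M').natAbs = M.natAbs / g := natAbs_div_nat M g hgM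
  have hgcdN : Nat.gcd M.natAbs x.natAbs = g := rfl
  constructor
  · rintro ⟨j, hj, hdvd⟩
    -- M' divides S_j
    have hxeq : x = (g:ℤ) * (x / g) := (Int.mul_ediv_cancel' hgx).symm
    have hdvd' : M' ∣ (x / g) * ∑ i ∈ Finset.range j, d₂ ^ i := by
      have : (g:ℤ) * M' ∣ (g:ℤ) * ((x / g) * ∑ i ∈ Finset.range j, d₂ ^ i) := by
        rw [← mul_assoc, ← hxeq, ← hMeq]; exact hdvd
      exact (mul_dvd_mul_iff_left (by exact_mod_cast hg0.ne' : (g:ℤ) ≠ 0)).1 this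
    have hMS : M' ∣ ∑ i ∈ Finset.range j, d₂ ^ i := hcop.dvd_of_dvd_mul_left hdvd'
    -- now coprimality
    rw [hgcdN, ← habs]
    by_contra hcon
    obtain ⟨p, hp, hpb, hpy⟩ := Nat.Prime.not_coprime_iff_dvd.1 hcon
    have hpd : (p:ℤ) ∣ d₂ :=
      dvd_trans (Int.natCast_dvd_natCast.2 hpb) (Int.natAbs_dvd.2 dvd_rfl)
    have hpS : (p:ℤ) ∣ ∑ i ∈ Finset.range j, d₂ ^ i :=
      dvd_trans (dvd_trans (Int.natCast_dvd_natCast.2 hpy) (Int.natAbs_dvd.2 dvd_rfl)) hMS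
    obtain ⟨jj, rfl⟩ : ∃ jj, j = jj + 1 := ⟨j - 1, by omega⟩
    rw [geom_sum_succ] at hpS
    have : (p:ℤ) ∣ 1 := (dvd_add_right (Dvd.dvd.mul_right hpd _)).1 hpS
    exact hp.not_dvd_one (by exact_mod_cast this)
  · intro hcop2
    rw [hgcdN, ← habs] at hcop2
    -- build T and use totient
    have he1 : d₂ - 1 ≠ 0 := sub_ne_zero.2 hd1
    set T : ℕ := (M' * (d₂ - 1)).natAbs with hTdef
    have hT0 : 0 < T := Int.natAbs_pos.2 (mul_ne_zero hM'0 he1)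
    have hbT : Nat.Coprime d₂.natAbs T := by
      rw [hTdef, Int.natAbs_mul]
      refine Nat.Coprime.mul_right hcop2 ?_
      have : Int.gcd d₂ (d₂ - 1) = 1 := by
        rw [← Int.isCoprime_iff_gcd_eq_one]
        exact ⟨1, -1, by ring⟩
      exact this
    -- j := 2 * totient T
    refine ⟨2 * Nat.totient T, by have := Nat.totient_pos.2 hT0; omega, ?_⟩
    have hmod : (d₂.natAbs ^ 2) ^ Nat.totient T ≡ 1 [MOD T] :=
      Nat.ModEq.pow_totient (Nat.Coprime.pow_left 2 hbT)
    have hdd : (T:ℤ) ∣ (((d₂.natAbs ^ 2) ^ Nat.totient T : ℕ) : ℤ) - 1 :=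
      Nat.ModEq.dvd hmod.symm
    have hcast : (((d₂.natAbs ^ 2) ^ Nat.totient T : ℕ) : ℤ) = d₂ ^ (2 * Nat.totient T) := by
      push_cast
      rw [sq_abs, ← pow_mul]
    rw [hcast] at hdd
    have hMT : M' * (d₂ - 1) ∣ (T:ℤ) := Int.dvd_natAbs.2 dvd_rfl
    have hMd : M' * (d₂ - 1) ∣ (∑ i ∈ Finset.range (2 * Nat.totient T), d₂ ^ i) * (d₂ - 1) := by
      rw [geom_sum_mul]
      exact hMT.trans hdd
    have hMS : M' ∣ ∑ i ∈ Finset.range (2 * Nat.totient T), d₂ ^ i :=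
      (mul_dvd_mul_iff_right he1).1 hMd
    have hxeq : x = (g:ℤ) * (x / g) := (Int.mul_ediv_cancel' hgx).symm
    rw [hMeq, hxeq, mul_assoc]
    exact mul_dvd_mul_left (g:ℤ) (hMS.trans (dvd_mul_left _ _))


private lemma diff_lemma (d₂ κ m : ℤ) (k j : ℕ) :
    (m * d₂ ^ (k + j) + κ * ∑ i ∈ Finset.range (k + j), d₂ ^ i) -
      (m * d₂ ^ k + κ * ∑ i ∈ Finset.range k, d₂ ^ i)
      = d₂ ^ k * (m * (d₂ - 1) + κ) * ∑ i ∈ Finset.range j, d₂ ^ i := by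
  have hsplit : ∑ i ∈ Finset.range (k + j), d₂ ^ i
      = ∑ i ∈ Finset.range k, d₂ ^ i + d₂ ^ k * ∑ i ∈ Finset.range j, d₂ ^ i := by
    rw [Finset.sum_range_add, Finset.mul_sum]
    simp [pow_add]
  rw [hsplit, pow_add]
  linear_combination (-(m * d₂ ^ k)) * geom_sum_mul d₂ j

theorem exists_minimal_n0 (d₁ d₂ κ m : ℤ) (hd : d₁ ≠ d₂) (hd₂0 : d₂ ≠ 0) (hd₂1 : d₂ ≠ 1)
    (hm : m * (d₂ - 1) + κ ≠ 0) :
    ∃ n₀ : ℕ,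
      IsLeast {k : ℕ | ∃ n : ℕ, k < n ∧
        m * d₂ ^ k + κ * (∑ i ∈ Finset.range k, d₂ ^ i) ≡
          m * d₂ ^ n + κ * (∑ i ∈ Finset.range n, d₂ ^ i) [ZMOD |d₁ - d₂|]} n₀ ∧
      IsLeast {N : ℕ |
        Int.gcd d₂ (((d₁ - d₂) * (d₂ - 1)) /
          (Int.gcd ((d₁ - d₂) * (d₂ - 1)) (d₂ ^ N * (m * (d₂ - 1) + κ)) : ℤ)) = 1} n₀ := by
  have hMne : d₁ - d₂ ≠ 0 := sub_ne_zero.2 hd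
  have he1 : d₂ - 1 ≠ 0 := sub_ne_zero.2 hd₂1
  have hbe : Nat.Coprime d₂.natAbs (d₂ - 1).natAbs := by
    have : Int.gcd d₂ (d₂ - 1) = 1 := by
      rw [← Int.isCoprime_iff_gcd_eq_one]; exact ⟨1, -1, by ring⟩
    exact this
  have hxne : ∀ N : ℕ, d₂ ^ N * (m * (d₂ - 1) + κ) ≠ 0 :=
    fun N => mul_ne_zero (pow_ne_zero _ hd₂0) hm
  -- the common predicate
  set P : ℕ → Prop :=
    fun N => Nat.Coprime d₂.natAbs
      ((d₁ - d₂).natAbs /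
        Nat.gcd (d₁ - d₂).natAbs ((d₂ ^ N * (m * (d₂ - 1) + κ)).natAbs)) with hP
  -- claim 1 : first set is P
  have claim1 : ∀ k : ℕ, (∃ n : ℕ, k < n ∧
      m * d₂ ^ k + κ * (∑ i ∈ Finset.range k, d₂ ^ i) ≡
        m * d₂ ^ n + κ * (∑ i ∈ Finset.range n, d₂ ^ i) [ZMOD |d₁ - d₂|]) ↔ P k := by
    intro k
    simp only [hP]
    rw [← key_lemma d₂ (d₁ - d₂) (d₂ ^ k * (m * (d₂ - 1) + κ)) hd₂0 hd₂1 hMne (hxne k)]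
    constructor
    · rintro ⟨n, hkn, hmod⟩
      obtain ⟨j, rfl⟩ : ∃ j, n = k + j := ⟨n - k, by omega⟩
      have hdvd := Int.modEq_iff_dvd.1 hmod
      rw [abs_dvd, diff_lemma] at hdvd
      exact ⟨j, by omega, hdvd⟩
    · rintro ⟨j, hj, hdvd⟩
      refine ⟨k + j, by omega, Int.modEq_iff_dvd.2 ?_⟩
      rw [abs_dvd, diff_lemma]
      exact hdvd
  -- claim 2 : second set is P
  have claim2 : ∀ N : ℕ, (Int.gcd d₂ (((d₁ - d₂) * (d₂ - 1)) /
      (Int.gcd ((d₁ - d₂) * (d₂ - 1)) (d₂ ^ N * (m * (d₂ - 1) + κ)) : ℤ)) = 1) ↔ P N := by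
    intro N
    have hDne : (d₁ - d₂) * (d₂ - 1) ≠ 0 := mul_ne_zero hMne he1
    have hgD : ((Int.gcd ((d₁ - d₂) * (d₂ - 1)) (d₂ ^ N * (m * (d₂ - 1) + κ)) : ℕ) : ℤ) ∣
        (d₁ - d₂) * (d₂ - 1) := Int.gcd_dvd_left _ _
    have h1 : (((d₁ - d₂) * (d₂ - 1)) /
        (Int.gcd ((d₁ - d₂) * (d₂ - 1)) (d₂ ^ N * (m * (d₂ - 1) + κ)) : ℤ)).natAbs
        = ((d₁ - d₂).natAbs * (d₂ - 1).natAbs) /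
          Nat.gcd ((d₁ - d₂).natAbs * (d₂ - 1).natAbs)
            ((d₂ ^ N * (m * (d₂ - 1) + κ)).natAbs) := by
      rw [natAbs_div_nat _ _ hgD]
      simp [Int.gcd, Int.natAbs_mul]
    show Nat.gcd d₂.natAbs _ = 1 ↔ _
    rw [h1]
    simp only [hP]
    exact fac_lemma (d₁ - d₂).natAbs (d₂ - 1).natAbs
      ((d₂ ^ N * (m * (d₂ - 1) + κ)).natAbs) d₂.natAbs
      (Int.natAbs_ne_zero.2 hMne) (Int.natAbs_ne_zero.2 he1)
      (Int.natAbs_ne_zero.2 (hxne N)) hbe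
  -- nonemptiness of P
  have hPne : P ((d₁ - d₂).natAbs) := by
    simp only [hP]
    have : (d₂ ^ ((d₁ - d₂).natAbs) * (m * (d₂ - 1) + κ)).natAbs
        = d₂.natAbs ^ ((d₁ - d₂).natAbs) * (m * (d₂ - 1) + κ).natAbs := by
      rw [Int.natAbs_mul, Int.natAbs_pow]
    rw [this]
    exact nonempty_lemma _ _ _ (Int.natAbs_ne_zero.2 hMne) (Int.natAbs_ne_zero.2 hd₂0)
      (Int.natAbs_ne_zero.2 hm)
  have hSne : {N : ℕ | P N}.Nonempty := ⟨_, hPne⟩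
  refine ⟨sInf {N : ℕ | P N}, ⟨(claim1 _).2 (Nat.sInf_mem hSne), fun k hk => Nat.sInf_le ((claim1 k).1 hk)⟩,
    ⟨(claim2 _).2 (Nat.sInf_mem hSne), fun k hk => Nat.sInf_le ((claim2 k).1 hk)⟩⟩
end
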